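/- Let E be a reflexive Banach space, let α : S ↷ A be an inverse semigroup action on a Banach algebra A, let π : A → B(E) be a contractive algebra homomorphism, and let v : S → B(E) be a map with ‖v_t‖ ≤ 1 for all t satisfying: (CR1) v_t π(a) = π(α_t(a)) v_t for all a ∈ I_{t*}, t ∈ S; (CR2) π(a) v_s v_t = π(a) v_{st} for all a ∈ I_{st}, s, t ∈ S; (CR3) π(a) v_e = π(a) for all a ∈ I_e, e ∈ E(S). Then there exists a unique covariant representation (π, ṽ) of α on E (i.e. ṽ : S → B(E) is a contractive semigroup homomorphism satisfying (SCR1) ṽ_t π(a) = π(α_t(a)) ṽ_t for a ∈ I_{t*} and (SCR2) ṽ_t E = closed linear span of π(I_t)E) such that π(a) v_t = π(a) ṽ_t for all a ∈ I_t and t ∈ S. -/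

import Mathlib

set_option autoImplicit false

open Filter Topology

/-- An inverse semigroup: every element `t` has a generalized inverse `sInv t`,
which is the unique `w` with `t * w * t = t` and `w * t * w = w`. -/
def IsInvSemigroup (S : Type*) [Semigroup S] (sInv : S → S) : Prop :=
  (∀ t : S, t * sInv t * t = t) ∧ (∀ t : S, sInv t * t * sInv t = sInv t) ∧
    ∀ t w : S, t * w * t = t → w * t * w = w → w = sInv t

/-- An action of an inverse semigroup `S` (with generalized inverse `sInv`) on a
Banach algebra `A` by partial automorphisms `act t : I (sInv t) → I t` between
closed two-sided ideals, satisfying (PA1) and (PA2). -/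
structure InvSemigroupAction (S : Type*) [Semigroup S] (sInv : S → S)
    (A : Type*) [NonUnitalNormedRing A] [NormedSpace ℂ A] where
  /-- the ideals `I t` -/
  I : S → Submodule ℂ A
  /-- the partial automorphisms; only the values on `I (sInv t)` are relevant -/
  act : S → A → A
  ideal_closed : ∀ t, IsClosed (I t : Set A)
  ideal_mul_left : ∀ t (a : A), ∀ x ∈ I t, a * x ∈ I t
  ideal_mul_right : ∀ t (a : A), ∀ x ∈ I t, x * a ∈ I t
  act_mem : ∀ t, ∀ a ∈ I (sInv t), act t a ∈ I t
  act_surjOn : ∀ t, ∀ b ∈ I t, ∃ a ∈ I (sInv t), act t a = b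
  act_add : ∀ t, ∀ a ∈ I (sInv t), ∀ b ∈ I (sInv t), act t (a + b) = act t a + act t b
  act_smul : ∀ t (c : ℂ), ∀ a ∈ I (sInv t), act t (c • a) = c • act t a
  act_mul : ∀ t, ∀ a ∈ I (sInv t), ∀ b ∈ I (sInv t), act t (a * b) = act t a * act t b
  act_norm : ∀ t, ∀ a ∈ I (sInv t), ‖act t a‖ = ‖a‖
  /-- (PA1): `act s ∘ act t = act (s*t)` as partial maps: domains match ... -/
  comp_dom : ∀ s t (a : A), (a ∈ I (sInv t) ∧ act t a ∈ I (sInv s)) ↔ a ∈ I (sInv (s * t))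
  /-- (PA1): ... and values agree on the common domain. -/
  comp_act : ∀ s t, ∀ a ∈ I (sInv (s * t)), act s (act t a) = act (s * t) a
  /-- (PA2): each ideal has a contractive two-sided approximate unit (as a filter/net). -/
  approx_unit : ∀ t, ∃ l : Filter A, l.NeBot ∧ (∀ᶠ x in l, x ∈ I t ∧ ‖x‖ ≤ 1) ∧
    ∀ a ∈ I t, Tendsto (fun x => x * a) l (𝓝 a) ∧ Tendsto (fun x => a * x) l (𝓝 a)
  /-- (PA2): the union of the ideals over idempotents has dense linear span. -/
  dense_span : Dense (↑(Submodule.span ℂ (⋃ e ∈ {e : S | e * e = e}, (I e : Set A))) : Set A)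

/-- A covariant representation of an inverse semigroup action on a Banach space `E`:
`π` is a contractive algebra homomorphism `A → B(E)`, `v` is a contractive semigroup
homomorphism satisfying (SCR1) and (SCR2). -/
structure IsCovariantRep {S : Type*} [Semigroup S] {sInv : S → S}
    {A : Type*} [NonUnitalNormedRing A] [NormedSpace ℂ A]
    {E : Type*} [NormedAddCommGroup E] [NormedSpace ℂ E]
    (θ : InvSemigroupAction S sInv A)
    (π : A → E →L[ℂ] E) (v : S → E →L[ℂ] E) : Prop where
  π_norm : ∀ a, ‖π a‖ ≤ ‖a‖
  π_add : ∀ a b, π (a + b) = π a + π b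
  π_smul : ∀ (c : ℂ) (a : A), π (c • a) = c • π a
  π_mul : ∀ a b, π (a * b) = π a * π b
  v_norm : ∀ t, ‖v t‖ ≤ 1
  v_mul : ∀ s t, v (s * t) = v s * v t
  scr1 : ∀ t, ∀ a ∈ θ.I (sInv t), v t * π a = π (θ.act t a) * v t
  scr2 : ∀ t, Set.range (v t) =
    closure (↑(Submodule.span ℂ {x : E | ∃ a ∈ θ.I t, ∃ ξ : E, π a ξ = x}) : Set E)

/-!
By reflexivity, closed balls of `E` are weakly compact, so along an ultrafilter finer than a
contractive approximate unit `(u)` of `I t` the operators `π u` converge in the weak operator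
topology to a contraction `P t`. It satisfies `π a * P t = π a = P t * π a` for `a ∈ I t` and maps
into the essential subspace `M t`, the closed span of `π (I t) E`; hence `P t` fixes `M t`, and
vectors of `M t` are determined by their images under `π (I t)`. The normalization is
`ṽ t = P t * v t`: each covariance relation for `ṽ` is checked on such images, where (CR1)–(CR3)
apply, and (SCR2) forces the range of any other candidate into `M t`, which gives uniqueness.
Multiplicativity rests on `α_{s*}` mapping `I (s t)` into `I t`.
-/

section WeakLimits

variable {𝕜 E F α : Type*} [RCLike 𝕜] [NormedAddCommGroup E] [NormedSpace 𝕜 E]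
  [NormedAddCommGroup F] [NormedSpace 𝕜 F]

theorem tendsto_toWeakSpace {l : Filter α} {g : α → F} {y : F} (h : Tendsto g l (𝓝 y)) :
    Tendsto (fun u => toWeakSpace 𝕜 F (g u)) l (𝓝 (toWeakSpace 𝕜 F y)) :=
  ((toWeakSpaceCLM 𝕜 F).continuous.tendsto y).comp h

variable [NormedSpace ℝ F] [IsScalarTower ℝ 𝕜 F]

theorem mem_of_tendsto_toWeakSpace {l : Filter α} [l.NeBot] {N : Submodule 𝕜 F}
    (hN : IsClosed (N : Set F)) {g : α → F} (hg : ∀ᶠ u in l, g u ∈ N) {y : F}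
    (hy : Tendsto (fun u => toWeakSpace 𝕜 F (g u)) l (𝓝 (toWeakSpace 𝕜 F y))) : y ∈ N := by
  have hcl : toWeakSpace 𝕜 F y ∈ closure (toWeakSpace 𝕜 F '' N) :=
    mem_closure_of_tendsto hy (hg.mono fun u hu => Set.mem_image_of_mem _ hu)
  have hconv : Convex ℝ (N : Set F) := (N.restrictScalars ℝ).convex
  rw [← hconv.toWeakSpace_closure 𝕜, hN.closure_eq] at hcl
  exact (toWeakSpace 𝕜 F).injective.mem_set_image.mp hcl

theorem exists_tendsto_toWeakSpace_of_eventually_norm_le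
    (hrefl : Function.Surjective (NormedSpace.inclusionInDoubleDual 𝕜 F))
    (U : Ultrafilter α) {g : α → F} {C : ℝ} (hg : ∀ᶠ u in U, ‖g u‖ ≤ C) :
    ∃ y : F, ‖y‖ ≤ C ∧ Tendsto (fun u => toWeakSpace 𝕜 F (g u)) U (𝓝 (toWeakSpace 𝕜 F y)) := by
  set B : Set (WeakSpace 𝕜 F) := toWeakSpace 𝕜 F '' Metric.closedBall 0 C
  have hB : IsCompact (closure B) := by
    refine NormedSpace.isCompact_closure_of_isBounded 𝕜 F B ?_ fun Φ _ => ?_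
    · rw [Set.preimage_image_eq _ (toWeakSpace 𝕜 F).injective]
      exact Metric.isBounded_closedBall
    · obtain ⟨y, hy⟩ := hrefl (WeakDual.toStrongDual Φ)
      exact ⟨toWeakSpace 𝕜 F y, DFunLike.ext _ _ fun f => congrArg (fun Ψ => Ψ f) hy⟩
  have hUB : (U.map fun u => toWeakSpace 𝕜 F (g u) : Filter (WeakSpace 𝕜 F)) ≤ 𝓟 (closure B) := by
    rw [le_principal_iff, Ultrafilter.coe_map, mem_map]
    filter_upwards [hg] with u hu
    exact subset_closure ⟨g u, by simpa using hu, rfl⟩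
  obtain ⟨z, hz, hlim⟩ := hB.ultrafilter_le_nhds _ hUB
  rw [← (convex_closedBall 0 C).toWeakSpace_closure 𝕜, Metric.isClosed_closedBall.closure_eq] at hz
  obtain ⟨y, hy, rfl⟩ := hz
  exact ⟨y, by simpa using hy, hlim⟩

theorem exists_tendsto_toWeakSpace_apply_of_eventually_norm_le
    (hrefl : Function.Surjective (NormedSpace.inclusionInDoubleDual 𝕜 F))
    (U : Ultrafilter α) {T : α → E →L[𝕜] F} {C : ℝ} (hT : ∀ᶠ u in U, ‖T u‖ ≤ C) :
    ∃ P : E →L[𝕜] F, ‖P‖ ≤ C ∧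
      ∀ ξ, Tendsto (fun u => toWeakSpace 𝕜 F (T u ξ)) U (𝓝 (toWeakSpace 𝕜 F (P ξ))) := by
  have hex (ξ : E) : ∃ y : F, ‖y‖ ≤ C * ‖ξ‖ ∧
      Tendsto (fun u => toWeakSpace 𝕜 F (T u ξ)) U (𝓝 (toWeakSpace 𝕜 F y)) :=
    exists_tendsto_toWeakSpace_of_eventually_norm_le hrefl U
      (hT.mono fun u hu => (T u).le_of_opNorm_le hu ξ)
  choose P hPnorm hP using hex
  have hadd (ξ η : E) : P (ξ + η) = P ξ + P η :=
    (toWeakSpace 𝕜 F).injective <| tendsto_nhds_unique (hP (ξ + η)) <| by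
      simpa only [map_add] using (hP ξ).add (hP η)
  have hsmul (c : 𝕜) (ξ : E) : P (c • ξ) = c • P ξ :=
    (toWeakSpace 𝕜 F).injective <| tendsto_nhds_unique (hP (c • ξ)) <| by
      simpa only [map_smul] using (hP ξ).const_smul c
  have hC : 0 ≤ C := by
    obtain ⟨u, hu⟩ := hT.exists
    exact (norm_nonneg _).trans hu
  exact ⟨LinearMap.mkContinuous ⟨⟨P, hadd⟩, hsmul⟩ C hPnorm,
    LinearMap.mkContinuous_norm_le _ hC _, hP⟩

end WeakLimits

namespace IsInvSemigroup

variable {S : Type*} [Semigroup S] {sInv : S → S}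

theorem sInv_sInv (hS : IsInvSemigroup S sInv) (t : S) : sInv (sInv t) = t :=
  (hS.2.2 (sInv t) t (hS.2.1 t) (hS.1 t)).symm

theorem sInv_eq_self (hS : IsInvSemigroup S sInv) {e : S} (he : IsIdempotentElem e) :
    sInv e = e :=
  (hS.2.2 e e (by rw [he.eq, he.eq]) (by rw [he.eq, he.eq])).symm

theorem isIdempotentElem_mul_sInv (hS : IsInvSemigroup S sInv) (t : S) :
    IsIdempotentElem (t * sInv t) := by
  rw [IsIdempotentElem, ← mul_assoc, hS.1 t]

theorem isIdempotentElem_sInv_mul (hS : IsInvSemigroup S sInv) (t : S) :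
    IsIdempotentElem (sInv t * t) := by
  rw [IsIdempotentElem, ← mul_assoc, hS.2.1 t]

end IsInvSemigroup

namespace InvSemigroupAction

variable {S A : Type*} [Semigroup S] [NonUnitalNormedRing A] [NormedSpace ℂ A] {sInv : S → S}
  (θ : InvSemigroupAction S sInv A)

theorem act_sub {t : S} {a b : A} (ha : a ∈ θ.I (sInv t)) (hb : b ∈ θ.I (sInv t)) :
    θ.act t (a - b) = θ.act t a - θ.act t b := by
  have hneg : θ.act t (-b) = -θ.act t b := by simpa using θ.act_smul t (-1) b hb
  rw [sub_eq_add_neg, θ.act_add t a ha (-b) (neg_mem hb), hneg, ← sub_eq_add_neg]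

theorem act_eq_self (hS : IsInvSemigroup S sInv) {e : S} (he : IsIdempotentElem e) {a : A}
    (ha : a ∈ θ.I e) : θ.act e a = a := by
  have hse := hS.sInv_eq_self he
  have ha' : a ∈ θ.I (sInv e) := by rwa [hse]
  have hact : θ.act e a ∈ θ.I (sInv e) := by rw [hse]; exact θ.act_mem e a ha'
  have hfix : θ.act e (θ.act e a) = θ.act e a := by
    rw [θ.comp_act e e a (by rwa [he.eq]), he.eq]
  -- `act e` is isometric, hence injective, and it fixes `act e a`
  have hnorm := θ.act_norm e _ (sub_mem hact ha')
  rwa [θ.act_sub hact ha', hfix, sub_self, norm_zero, eq_comm, norm_eq_zero, sub_eq_zero] at hnorm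

theorem act_sInv_act (hS : IsInvSemigroup S sInv) {t : S} {a : A} (ha : a ∈ θ.I (sInv t)) :
    θ.act (sInv t) (θ.act t a) = a := by
  have hdom : a ∈ θ.I (sInv (sInv t * t)) :=
    (θ.comp_dom (sInv t) t a).mp ⟨ha, by rw [hS.sInv_sInv]; exact θ.act_mem t a ha⟩
  have he := hS.isIdempotentElem_sInv_mul t
  rw [θ.comp_act _ _ a hdom]
  exact θ.act_eq_self hS he (by rwa [hS.sInv_eq_self he] at hdom)

theorem act_act_sInv (hS : IsInvSemigroup S sInv) {t : S} {b : A} (hb : b ∈ θ.I t) :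
    θ.act t (θ.act (sInv t) b) = b := by
  simpa only [hS.sInv_sInv] using θ.act_sInv_act hS (t := sInv t) (by rwa [hS.sInv_sInv])

theorem act_sInv_mem (hS : IsInvSemigroup S sInv) {t : S} {b : A} (hb : b ∈ θ.I t) :
    θ.act (sInv t) b ∈ θ.I (sInv t) :=
  θ.act_mem (sInv t) b (by rwa [hS.sInv_sInv])

theorem exists_act_eq_of_mem_mul {s t : S} {m : A} (hm : m ∈ θ.I (s * t)) :
    ∃ y ∈ θ.I t, y ∈ θ.I (sInv s) ∧ θ.act s y = m := by
  obtain ⟨x, hx, rfl⟩ := θ.act_surjOn (s * t) m hm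
  obtain ⟨hxt, hxs⟩ := (θ.comp_dom s t x).mpr hx
  exact ⟨θ.act t x, θ.act_mem t x hxt, hxs, θ.comp_act s t x hx⟩

theorem I_mul_le (s t : S) : θ.I (s * t) ≤ θ.I s := fun m hm => by
  obtain ⟨y, -, hys, rfl⟩ := θ.exists_act_eq_of_mem_mul hm
  exact θ.act_mem s y hys

theorem act_sInv_mem_of_mem_mul (hS : IsInvSemigroup S sInv) {s t : S} {m : A}
    (hm : m ∈ θ.I (s * t)) : θ.act (sInv s) m ∈ θ.I t := by
  obtain ⟨y, hyt, hys, rfl⟩ := θ.exists_act_eq_of_mem_mul hm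
  rwa [θ.act_sInv_act hS hys]

theorem act_mem_mul (hS : IsInvSemigroup S sInv) {s t : S} {c : A} (hcs : c ∈ θ.I (sInv s))
    (hct : c ∈ θ.I t) : θ.act s c ∈ θ.I (s * t) := by
  have hback := θ.act_act_sInv hS hct
  have hdom := (θ.comp_dom s t _).mp ⟨θ.act_sInv_mem hS hct, by rwa [hback]⟩
  rw [← hback, θ.comp_act s t _ hdom]
  exact θ.act_mem _ _ hdom

theorem I_le_I_mul_sInv (hS : IsInvSemigroup S sInv) (t : S) : θ.I t ≤ θ.I (t * sInv t) :=
  fun a ha => by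
    have h := (θ.comp_dom t (sInv t) a).mp ⟨by rwa [hS.sInv_sInv], θ.act_sInv_mem hS ha⟩
    rwa [hS.sInv_eq_self (hS.isIdempotentElem_mul_sInv t)] at h

end InvSemigroupAction

section EssentialProjection

variable {A E : Type*} [NormedAddCommGroup E] [NormedSpace ℂ E]

def essentialSubspace (π : A → E →L[ℂ] E) (I : Set A) : Submodule ℂ E :=
  (Submodule.span ℂ {x : E | ∃ a ∈ I, ∃ ξ : E, π a ξ = x}).topologicalClosure

theorem isClosed_essentialSubspace (π : A → E →L[ℂ] E) (I : Set A) :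
    IsClosed (essentialSubspace π I : Set E) :=
  Submodule.isClosed_topologicalClosure _

theorem apply_mem_essentialSubspace_of_mem {π : A → E →L[ℂ] E} {I : Set A} {a : A} (ha : a ∈ I)
    (ξ : E) : π a ξ ∈ essentialSubspace π I :=
  Submodule.le_topologicalClosure _ (Submodule.subset_span ⟨a, ha, ξ, rfl⟩)

theorem essentialSubspace_mono (π : A → E →L[ℂ] E) {I J : Set A} (h : I ⊆ J) :
    essentialSubspace π I ≤ essentialSubspace π J :=
  Submodule.topologicalClosure_mono <| Submodule.span_mono fun _ ⟨a, ha, ξ, hξ⟩ => ⟨a, h ha, ξ, hξ⟩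

structure IsEssentialProjection (π : A → E →L[ℂ] E) (I : Set A) (P : E →L[ℂ] E) : Prop where
  norm_le_one : ‖P‖ ≤ 1
  mul_eq : ∀ a ∈ I, π a * P = π a
  eq_mul : ∀ b ∈ I, P * π b = π b
  apply_mem_closure_span : ∀ ξ, P ξ ∈ (Submodule.span ℂ ((π · ξ) '' I)).topologicalClosure

theorem exists_isEssentialProjection [NonUnitalNormedRing A] [NormedSpace ℂ A]
    (hrefl : Function.Surjective (NormedSpace.inclusionInDoubleDual ℂ E))
    {π : A → E →L[ℂ] E} (hπ_cont : Continuous π) (hπ_mul : ∀ a b, π (a * b) = π a * π b)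
    (hπ_norm : ∀ a, ‖π a‖ ≤ ‖a‖) {I : Set A} {l : Filter A} [l.NeBot]
    (hl : ∀ᶠ u in l, u ∈ I ∧ ‖u‖ ≤ 1) (hl_left : ∀ a ∈ I, Tendsto (· * a) l (𝓝 a))
    (hl_right : ∀ a ∈ I, Tendsto (a * ·) l (𝓝 a)) :
    ∃ P, IsEssentialProjection π I P := by
  set U := Ultrafilter.of l
  have hU : ∀ᶠ u in (U : Filter A), u ∈ I ∧ ‖u‖ ≤ 1 := hl.filter_mono (Ultrafilter.of_le l)
  obtain ⟨P, hPnorm, hP⟩ := exists_tendsto_toWeakSpace_apply_of_eventually_norm_le hrefl U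
    (hU.mono fun u hu => (hπ_norm u).trans hu.2)
  have hπ_apply (ξ : E) : Continuous (π · ξ) := hπ_cont.clm_apply continuous_const
  refine ⟨P, hPnorm, fun a ha => ?_, fun b hb => ?_, fun ξ => ?_⟩
  · ext ξ
    have hlim : Tendsto (fun u => π (a * u) ξ) U (𝓝 (π a ξ)) :=
      ((hπ_apply ξ).tendsto a).comp ((hl_right a ha).mono_left (Ultrafilter.of_le l))
    have h1 : Tendsto (fun u => toWeakSpace ℂ E (π a (π u ξ))) U
        (𝓝 (toWeakSpace ℂ E (π a (P ξ)))) :=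
      ((WeakSpace.map (π a)).continuous.tendsto _).comp (hP ξ)
    have h2 : Tendsto (fun u => toWeakSpace ℂ E (π a (π u ξ))) U
        (𝓝 (toWeakSpace ℂ E (π a ξ))) := by
      simpa [hπ_mul] using tendsto_toWeakSpace hlim
    exact (toWeakSpace ℂ E).injective (tendsto_nhds_unique h1 h2)
  · ext ξ
    have hlim : Tendsto (fun u => π (u * b) ξ) U (𝓝 (π b ξ)) :=
      ((hπ_apply ξ).tendsto b).comp ((hl_left b hb).mono_left (Ultrafilter.of_le l))
    refine (toWeakSpace ℂ E).injective <| tendsto_nhds_unique (hP (π b ξ)) ?_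
    simpa [hπ_mul] using tendsto_toWeakSpace hlim
  · refine mem_of_tendsto_toWeakSpace (Submodule.isClosed_topologicalClosure _) ?_ (hP ξ)
    filter_upwards [hU] with u hu
    exact Submodule.le_topologicalClosure _ (Submodule.subset_span ⟨u, hu.1, rfl⟩)

namespace IsEssentialProjection

variable {π : A → E →L[ℂ] E} {I : Set A} {P : E →L[ℂ] E} (hP : IsEssentialProjection π I P)
include hP

theorem apply_mem_of_forall_mem {N : Submodule ℂ E} (hN : IsClosed (N : Set E)) {ξ : E}
    (h : ∀ u ∈ I, π u ξ ∈ N) : P ξ ∈ N :=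
  Submodule.topologicalClosure_minimal _
    (Submodule.span_le.mpr <| by rintro _ ⟨u, hu, rfl⟩; exact h u hu) hN
    (hP.apply_mem_closure_span ξ)

theorem apply_mem_essentialSubspace (ξ : E) : P ξ ∈ essentialSubspace π I :=
  hP.apply_mem_of_forall_mem (isClosed_essentialSubspace π I) fun _ hu =>
    apply_mem_essentialSubspace_of_mem hu ξ

theorem apply_eq_self {ζ : E} (hζ : ζ ∈ essentialSubspace π I) : P ζ = ζ := by
  have hfix : essentialSubspace π I ≤ LinearMap.ker (P - 1 : E →L[ℂ] E) :=
    Submodule.topologicalClosure_minimal _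
      (Submodule.span_le.mpr <| by
        rintro _ ⟨b, hb, ξ, rfl⟩
        change (P - 1) (π b ξ) = 0
        rw [sub_apply, sub_eq_zero]
        exact DFunLike.congr_fun (hP.eq_mul b hb) ξ)
      (P - 1).isClosed_ker
  simpa [sub_eq_zero] using hfix hζ

theorem eq_of_forall_apply_eq {X Y : E} (hX : X ∈ essentialSubspace π I)
    (hY : Y ∈ essentialSubspace π I) (h : ∀ u ∈ I, π u X = π u Y) : X = Y := by
  have hzero : P (X - Y) = 0 := by
    simpa using hP.apply_mem_of_forall_mem (N := ⊥) (ξ := X - Y) (by simp)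
      fun u hu => by simp [h u hu]
  rw [← sub_eq_zero, ← hP.apply_eq_self (sub_mem hX hY), hzero]

theorem eq_mul_of_range_subset {v w : E →L[ℂ] E} (hw : Set.range w ⊆ essentialSubspace π I)
    (h : ∀ a ∈ I, π a * v = π a * w) : w = P * v := by
  ext ξ
  refine hP.eq_of_forall_apply_eq (hw ⟨ξ, rfl⟩) (hP.apply_mem_essentialSubspace _) fun a ha => ?_
  have haw : π a * w = π a * (P * v) := by rw [← h a ha, ← mul_assoc, hP.mul_eq a ha]
  exact DFunLike.congr_fun haw ξ

end IsEssentialProjection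

end EssentialProjection

section Normalization

variable {S A E : Type*} [Semigroup S] [NonUnitalNormedRing A] [NormedSpace ℂ A]
  [NormedAddCommGroup E] [NormedSpace ℂ E] {sInv : S → S} {θ : InvSemigroupAction S sInv A}
  {π : A → E →L[ℂ] E} {v P : S → E →L[ℂ] E}

theorem mul_eq_mul_act_sInv (hS : IsInvSemigroup S sInv)
    (hcr1 : ∀ t, ∀ a ∈ θ.I (sInv t), v t * π a = π (θ.act t a) * v t)
    {s : S} {m : A} (hm : m ∈ θ.I s) : π m * v s = v s * π (θ.act (sInv s) m) := by
  rw [hcr1 s _ (θ.act_sInv_mem hS hm), θ.act_act_sInv hS hm]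

theorem proj_mul_mul_eq_mul_proj_mul (hP : ∀ t, IsEssentialProjection π (θ.I t) (P t))
    (hcr1 : ∀ t, ∀ a ∈ θ.I (sInv t), v t * π a = π (θ.act t a) * v t)
    (t : S) {a : A} (ha : a ∈ θ.I (sInv t)) :
    P t * v t * π a = π (θ.act t a) * (P t * v t) := by
  have hact := θ.act_mem t a ha
  rw [mul_assoc, hcr1 t a ha, ← mul_assoc, (hP t).eq_mul _ hact, ← mul_assoc,
    (hP t).mul_eq _ hact]

theorem proj_mul_eq_proj (hP : ∀ t, IsEssentialProjection π (θ.I t) (P t))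
    (hcr3 : ∀ e : S, e * e = e → ∀ a ∈ θ.I e, π a * v e = π a)
    {e : S} (he : IsIdempotentElem e) : P e * v e = P e := by
  ext ξ
  refine (hP e).eq_of_forall_apply_eq ((hP e).apply_mem_essentialSubspace _)
    ((hP e).apply_mem_essentialSubspace _) fun a ha => ?_
  have h : π a * (P e * v e) = π a * P e := by
    rw [← mul_assoc, (hP e).mul_eq a ha, hcr3 e he a ha]
  exact DFunLike.congr_fun h ξ

theorem proj_mul_apply_mem_essentialSubspace_mul (hS : IsInvSemigroup S sInv)
    (hπ_mul : ∀ a b, π (a * b) = π a * π b)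
    (hP : ∀ t, IsEssentialProjection π (θ.I t) (P t))
    (hcr1 : ∀ t, ∀ a ∈ θ.I (sInv t), v t * π a = π (θ.act t a) * v t)
    (s : S) {t : S} {ζ : E} (hζ : ζ ∈ essentialSubspace π (θ.I t)) :
    (P s * v s) ζ ∈ essentialSubspace π (θ.I (s * t)) := by
  suffices essentialSubspace π (θ.I t) ≤
      (essentialSubspace π (θ.I (s * t))).comap (P s * v s).toLinearMap from this hζ
  refine Submodule.topologicalClosure_minimal _ (Submodule.span_le.mpr ?_)
    ((isClosed_essentialSubspace _ _).preimage (P s * v s).continuous)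
  rintro _ ⟨b, hb, η, rfl⟩
  refine (hP s).apply_mem_of_forall_mem (isClosed_essentialSubspace _ _) fun u hu => ?_
  set c := θ.act (sInv s) u * b
  have hcs : c ∈ θ.I (sInv s) := θ.ideal_mul_right _ b _ (θ.act_sInv_mem hS hu)
  have h : π u * v s * π b = π (θ.act s c) * v s := by
    rw [mul_eq_mul_act_sInv hS hcr1 hu, mul_assoc, ← hπ_mul, hcr1 s c hcs]
  convert apply_mem_essentialSubspace_of_mem
    (θ.act_mem_mul hS hcs (θ.ideal_mul_left _ _ b hb)) (v s η) using 1
  exact DFunLike.congr_fun h η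

theorem proj_mul_mul_proj_mul (hS : IsInvSemigroup S sInv)
    (hπ_mul : ∀ a b, π (a * b) = π a * π b)
    (hP : ∀ t, IsEssentialProjection π (θ.I t) (P t))
    (hcr1 : ∀ t, ∀ a ∈ θ.I (sInv t), v t * π a = π (θ.act t a) * v t)
    (hcr2 : ∀ s t, ∀ a ∈ θ.I (s * t), π a * (v s * v t) = π a * v (s * t)) (s t : S) :
    P (s * t) * v (s * t) = P s * v s * (P t * v t) := by
  ext ξ
  refine (hP (s * t)).eq_of_forall_apply_eq ((hP _).apply_mem_essentialSubspace _)
    (proj_mul_apply_mem_essentialSubspace_mul hS hπ_mul hP hcr1 s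
      ((hP t).apply_mem_essentialSubspace _)) fun m hm => ?_
  have hms : m ∈ θ.I s := θ.I_mul_le s t hm
  have hnt := θ.act_sInv_mem_of_mem_mul hS hm
  have h : π m * (P s * v s * (P t * v t)) = π m * (P (s * t) * v (s * t)) :=
    calc π m * (P s * v s * (P t * v t)) = π m * P s * v s * P t * v t := by
          simp only [mul_assoc]
      _ = v s * (π (θ.act (sInv s) m) * P t) * v t := by
          rw [(hP s).mul_eq m hms, mul_eq_mul_act_sInv hS hcr1 hms]
          simp only [mul_assoc]
      _ = π m * (v s * v t) := by
          rw [(hP t).mul_eq _ hnt, ← mul_assoc, ← mul_eq_mul_act_sInv hS hcr1 hms, mul_assoc]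
      _ = π m * (P (s * t) * v (s * t)) := by
          rw [hcr2 s t m hm, ← mul_assoc, (hP _).mul_eq m hm]
  exact (DFunLike.congr_fun h ξ).symm

theorem range_proj_mul (hS : IsInvSemigroup S sInv)
    (hπ_mul : ∀ a b, π (a * b) = π a * π b)
    (hP : ∀ t, IsEssentialProjection π (θ.I t) (P t))
    (hcr1 : ∀ t, ∀ a ∈ θ.I (sInv t), v t * π a = π (θ.act t a) * v t)
    (hcr2 : ∀ s t, ∀ a ∈ θ.I (s * t), π a * (v s * v t) = π a * v (s * t))
    (hcr3 : ∀ e : S, e * e = e → ∀ a ∈ θ.I e, π a * v e = π a) (t : S) :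
    Set.range (P t * v t) = essentialSubspace π (θ.I t) := by
  refine subset_antisymm
    (Set.range_subset_iff.mpr fun ξ => (hP t).apply_mem_essentialSubspace (v t ξ))
    fun x hx => ⟨(P (sInv t) * v (sInv t)) x, ?_⟩
  have hx' : x ∈ essentialSubspace π (θ.I (t * sInv t)) :=
    essentialSubspace_mono π (θ.I_le_I_mul_sInv hS t) hx
  change (P t * v t * (P (sInv t) * v (sInv t))) x = x
  rw [← proj_mul_mul_proj_mul hS hπ_mul hP hcr1 hcr2,
    proj_mul_eq_proj hP hcr3 (hS.isIdempotentElem_mul_sInv t), (hP _).apply_eq_self hx']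

end Normalization

theorem reflexive_normalization_exists_unique_general
    {S A E : Type*} [Semigroup S] [NonUnitalNormedRing A] [NormedSpace ℂ A]
    [NormedAddCommGroup E] [NormedSpace ℂ E]
    (hrefl : Function.Surjective ⇑(NormedSpace.inclusionInDoubleDual ℂ E))
    (sInv : S → S) (hS : IsInvSemigroup S sInv)
    (θ : InvSemigroupAction S sInv A)
    (π : A → E →L[ℂ] E) (v : S → E →L[ℂ] E)
    (hπ_norm : ∀ a, ‖π a‖ ≤ ‖a‖)
    (hπ_add : ∀ a b, π (a + b) = π a + π b)
    (hπ_smul : ∀ (c : ℂ) (a : A), π (c • a) = c • π a)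
    (hπ_mul : ∀ a b, π (a * b) = π a * π b)
    (hv_norm : ∀ t, ‖v t‖ ≤ 1)
    (hcr1 : ∀ t, ∀ a ∈ θ.I (sInv t), v t * π a = π (θ.act t a) * v t)
    (hcr2 : ∀ s t, ∀ a ∈ θ.I (s * t), π a * (v s * v t) = π a * v (s * t))
    (hcr3 : ∀ e : S, e * e = e → ∀ a ∈ θ.I e, π a * v e = π a) :
    ∃! w : S → E →L[ℂ] E,
      IsCovariantRep θ π w ∧ ∀ t, ∀ a ∈ θ.I t, π a * v t = π a * w t := by
  have hπ_cont : Continuous π := (AddMonoidHomClass.lipschitz_of_bound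
    (AddMonoidHom.mk' π hπ_add) 1 (by simpa using hπ_norm)).continuous
  have hP_ex (t : S) : ∃ P, IsEssentialProjection π (θ.I t) P := by
    obtain ⟨l, hl, hlI, hlu⟩ := θ.approx_unit t
    exact exists_isEssentialProjection hrefl hπ_cont hπ_mul hπ_norm hlI
      (fun a ha => (hlu a ha).1) fun a ha => (hlu a ha).2
  choose P hP using hP_ex
  have hcompat (t : S) (a : A) (ha : a ∈ θ.I t) : π a * v t = π a * (P t * v t) := by
    rw [← mul_assoc, (hP t).mul_eq a ha]
  refine ⟨fun t => P t * v t, ⟨⟨hπ_norm, hπ_add, hπ_smul, hπ_mul, fun t => ?_,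
    proj_mul_mul_proj_mul hS hπ_mul hP hcr1 hcr2,
    fun t _ ha => proj_mul_mul_eq_mul_proj_mul hP hcr1 t ha, fun t => ?_⟩, hcompat⟩,
    fun w ⟨hw, hw_compat⟩ => funext fun t => ?_⟩
  · calc ‖P t * v t‖ ≤ ‖P t‖ * ‖v t‖ := norm_mul_le _ _
      _ ≤ 1 := mul_le_one₀ (hP t).norm_le_one (norm_nonneg _) (hv_norm t)
  · rw [range_proj_mul hS hπ_mul hP hcr1 hcr2 hcr3 t]
    exact Submodule.topologicalClosure_coe _
  · exact (hP t).eq_mul_of_range_subset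
      ((hw.scr2 t).trans (Submodule.topologicalClosure_coe _).symm).subset (hw_compat t)

/-- on a reflexive Banach space `E`, every pair `(π, v)` satisfying
(CR1)–(CR3) (with `v` contractive) normalizes uniquely: there is a unique covariant
representation `(π, ṽ)` on `E` with `π(a) v_t = π(a) ṽ_t` for all `a ∈ I_t`, `t ∈ S`. -/
theorem reflexive_normalization_exists_unique
    {S A E : Type*} [Semigroup S] [NonUnitalNormedRing A] [NormedSpace ℂ A]
    [NormedAddCommGroup E] [NormedSpace ℂ E] [CompleteSpace E]
    (hrefl : Function.Surjective ⇑(NormedSpace.inclusionInDoubleDual ℂ E))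
    (sInv : S → S) (hS : IsInvSemigroup S sInv)
    (θ : InvSemigroupAction S sInv A)
    (π : A → E →L[ℂ] E) (v : S → E →L[ℂ] E)
    (hπ_norm : ∀ a, ‖π a‖ ≤ ‖a‖)
    (hπ_add : ∀ a b, π (a + b) = π a + π b)
    (hπ_smul : ∀ (c : ℂ) (a : A), π (c • a) = c • π a)
    (hπ_mul : ∀ a b, π (a * b) = π a * π b)
    (hv_norm : ∀ t, ‖v t‖ ≤ 1)
    (hcr1 : ∀ t, ∀ a ∈ θ.I (sInv t), v t * π a = π (θ.act t a) * v t)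
    (hcr2 : ∀ s t, ∀ a ∈ θ.I (s * t), π a * (v s * v t) = π a * v (s * t))
    (hcr3 : ∀ e : S, e * e = e → ∀ a ∈ θ.I e, π a * v e = π a) :
    ∃! w : S → E →L[ℂ] E,
      IsCovariantRep θ π w ∧ ∀ t, ∀ a ∈ θ.I t, π a * v t = π a * w t :=
  reflexive_normalization_exists_unique_general hrefl sInv hS θ π v hπ_norm hπ_add hπ_smul hπ_mul
    hv_norm hcr1 hcr2 hcr3
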